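/- For all n ≥ 1 and 1 ≤ k ≤ n, the number of permutations of [n] with k cycles and no occurrence of the partially ordered pattern 1–2–1′ equals the binomial coefficient C(n−1, k−1). -/

import Mathlib

open scoped Classical

noncomputable section

/-- `x` is the minimal element of its cycle under `π`. -/
def isCycMin {n : ℕ} (π : Equiv.Perm (Fin n)) (x : Fin n) : Prop :=
  ∀ y : Fin n, π.SameCycle x y → x ≤ y

/-- The minimal elements of the cycles of `π`, listed in decreasing order. -/
def cycMins {n : ℕ} (π : Equiv.Perm (Fin n)) : List (Fin n) :=
  ((List.finRange n).filter fun x => decide (isCycMin π x)).reverse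

/-- The number of elements in the cycle of `x` under `π` (a fixed point has cycle length 1). -/
def cycLen {n : ℕ} (π : Equiv.Perm (Fin n)) (x : Fin n) : ℕ :=
  Nat.card {y : Fin n // π.SameCycle x y}

/-- The cycle of `x` under `π`, written as the list `x, π x, π² x, …`. -/
def seg {n : ℕ} (π : Equiv.Perm (Fin n)) (x : Fin n) : List (Fin n) :=
  (List.range (cycLen π x)).map fun j => (π ^ j) x

/-- `Ψ(π)`: the word obtained by erasing the parentheses from the standard cycle form of `π`
(each cycle starts with its smallest element; cycles are in decreasing order of their minima). -/
def psiList {n : ℕ} (π : Equiv.Perm (Fin n)) : List (Fin n) :=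
  (cycMins π).foldr (fun m acc => seg π m ++ acc) []

/-- The word `Ψ(π)` as a function `ℕ → ℕ` (positions and values both 0-indexed). -/
def wordN {n : ℕ} (π : Equiv.Perm (Fin n)) (i : ℕ) : ℕ :=
  ((psiList π).map fun x => (x : ℕ)).getD i 0

/-- Positions `i` and `j` of the word `Ψ(π)` hold elements lying in the same cycle of `π`. -/
def sameCycleAt {n : ℕ} (π : Equiv.Perm (Fin n)) (i j : ℕ) : Prop :=
  ∃ a b : Fin n, (psiList π)[i]? = some a ∧ (psiList π)[j]? = some b ∧ π.SameCycle a b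

/-- The number of cycles of `π`, fixed points included. -/
def cyc {n : ℕ} (π : Equiv.Perm (Fin n)) : ℕ :=
  Nat.card {x : Fin n // isCycMin π x}

/-- The number of occurrences of the length-3 pattern described by `P` at triples of
positions `i < j < k` (all `< n`) in the word `w`. -/
def occ3 (n : ℕ) (w : ℕ → ℕ) (P : ℕ → ℕ → ℕ → Prop) : ℕ :=
  Nat.card {t : ℕ × ℕ × ℕ //
    t.1 < t.2.1 ∧ t.2.1 < t.2.2 ∧ t.2.2 < n ∧ P (w t.1) (w t.2.1) (w t.2.2)}

/-! An occurrence of 1–2–1′ in a word is a letter with a smaller letter somewhere before it and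
a smaller letter somewhere after it, so a word avoids the pattern as soon as it first decreases
and then increases. In `Ψ(π)` the cycles are listed by decreasing minima and the cycle of the
least element `0` comes last, starting with `0`. Hence `π` avoids the pattern iff every other
cycle is a fixed point (otherwise `m < π m` followed later by `0` is an occurrence) and the
cycle of `0` is increasing (otherwise `0`, followed by a descent inside it, is an occurrence).
Such a `π` is the increasing cycle through a set `s ∋ 0` and fixes the complement `t` of `s`, an
arbitrary subset of the `n - 1` nonzero elements; it has `|t| + 1` cycles, so there are
`C(n - 1, k - 1)` of them with `k` cycles. -/

namespace List

variable {α : Type*}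

def HasPeak [LT α] (l : List α) : Prop :=
  ∃ a b c, [a, b, c] <+ l ∧ a < b ∧ c < b

theorem HasPeak.mono [LT α] {l l' : List α} (h : l.HasPeak) (hl : l <+ l') : l'.HasPeak := by
  obtain ⟨a, b, c, hs, hab, hcb⟩ := h
  exact ⟨a, b, c, hs.trans hl, hab, hcb⟩

theorem not_hasPeak_append [Preorder α] {A B : List α} (hA : A.Pairwise (· ≥ ·))
    (hB : B.Pairwise (· ≤ ·)) : ¬(A ++ B).HasPeak := by
  rintro ⟨a, b, c, hs, hab, hcb⟩
  obtain ⟨l₁, l₂, hl, h₁, h₂⟩ := sublist_append_iff.mp hs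
  have key : [a, b] <+ A ∨ [b, c] <+ B := by
    rcases l₁ with _ | ⟨x, _ | ⟨y, l₁⟩⟩ <;> simp only [nil_append, cons_append, cons.injEq] at hl
    · exact .inr ((sublist_cons_self _ _).trans (hl ▸ h₂))
    · exact .inr (hl.2 ▸ h₂)
    · obtain ⟨rfl, rfl, -⟩ := hl
      exact .inl ((cons_sublist_cons.mpr (cons_sublist_cons.mpr (nil_sublist _))).trans h₁)
  rcases key with h | h
  · exact (pairwise_iff_forall_sublist.mp hA h).not_gt hab
  · exact (pairwise_iff_forall_sublist.mp hB h).not_gt hcb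

theorem pairwise_le_of_not_hasPeak_cons [LinearOrder α] {x : α} {l : List α}
    (hx : ∀ y ∈ l, x < y) (h : ¬(x :: l).HasPeak) : (x :: l).Pairwise (· ≤ ·) := by
  refine pairwise_cons.mpr ⟨fun y hy => (hx y hy).le, pairwise_iff_forall_sublist.mpr ?_⟩
  intro b c hbc
  by_contra hcb
  exact h ⟨x, b, c, hbc.cons_cons x, hx b (hbc.subset (mem_cons_self ..)), not_le.mp hcb⟩

end List

open Equiv Function
open scoped List

theorem occ3_getD_eq_zero_iff {α : Type*} (l : List α) (f : α → ℕ) (P : ℕ → ℕ → ℕ → Prop) :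
    occ3 l.length (fun i => (l.map f).getD i 0) P = 0 ↔
      ∀ a b c, [a, b, c] <+ l → ¬P (f a) (f b) (f c) := by
  have hfin : Finite {t : ℕ × ℕ × ℕ // t.1 < t.2.1 ∧ t.2.1 < t.2.2 ∧ t.2.2 < l.length ∧
      P ((l.map f).getD t.1 0) ((l.map f).getD t.2.1 0) ((l.map f).getD t.2.2 0)} := by
    refine Set.Finite.to_subtype ((Set.finite_Iio l.length).prod ((Set.finite_Iio l.length).prod
      (Set.finite_Iio l.length)) |>.subset ?_)
    rintro ⟨i, j, k⟩ ⟨hij, hjk, hk, -⟩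
    simp only [Set.mem_prod, Set.mem_Iio] at hij hjk hk ⊢
    omega
  rw [occ3, Nat.card_eq_zero, or_iff_left (not_infinite_iff_finite.mpr hfin), isEmpty_subtype]
  constructor
  · intro h a b c habc hP
    obtain ⟨is, his, hmono⟩ := List.sublist_eq_map_getElem habc
    rcases is with _ | ⟨i, _ | ⟨j, _ | ⟨k, _ | _⟩⟩⟩ <;> simp only [List.map_cons, List.map_nil,
      List.cons.injEq, reduceCtorEq, and_false] at his
    simp only [List.pairwise_cons, List.mem_cons, List.not_mem_nil, forall_eq_or_imp,
      List.Pairwise.nil] at hmono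
    refine h (i, j, k) ⟨hmono.1.1, hmono.2.1.1, k.2, ?_⟩
    simpa [List.getD_eq_getElem, his] using hP
  · rintro h ⟨i, j, k⟩ ⟨hij, hjk, hk, hP⟩
    dsimp only at hij hjk hk hP
    refine h l[i] l[j] l[k]
      (List.map_getElem_sublist (is := [⟨i, by omega⟩, ⟨j, by omega⟩, ⟨k, hk⟩]) ?_) ?_
    · simp only [List.pairwise_cons, List.mem_cons, List.not_mem_nil, forall_eq_or_imp,
        Fin.mk_lt_mk, false_imp_iff, implies_true, List.Pairwise.nil, and_true]
      omega
    · simpa [List.getD_eq_getElem, hk, show i < l.length by omega, show j < l.length by omega]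
        using hP

theorem Equiv.Perm.minimalPeriod_pos {α : Type*} [Finite α] (π : Perm α) (x : α) :
    0 < minimalPeriod π x :=
  minimalPeriod_pos_of_mem_periodicPts (π.injective.mem_periodicPts x)

theorem Equiv.Perm.sameCycle_iff_exists_lt_minimalPeriod {α : Type*} [Finite α] (π : Perm α)
    (x y : α) :
    π.SameCycle x y ↔ ∃ j < minimalPeriod π x, (π ^ j) x = y := by
  refine ⟨fun h => ?_, fun ⟨j, _, hj⟩ => ⟨j, by rw [zpow_natCast, hj]⟩⟩
  obtain ⟨j, rfl⟩ := h.exists_nat_pow_eq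
  refine ⟨j % minimalPeriod π x, Nat.mod_lt _ (π.minimalPeriod_pos x), ?_⟩
  rw [← Perm.iterate_eq_pow, ← Perm.iterate_eq_pow]
  exact iterate_mod_minimalPeriod_eq

section CycleForm

variable {n : ℕ} (π : Perm (Fin n))

theorem cycLen_eq_minimalPeriod (x : Fin n) : cycLen π x = minimalPeriod π x := by
  have hinj : Injective fun j : Fin (minimalPeriod π x) => (π ^ (j : ℕ)) x := by
    intro i j h
    simp only [← Perm.iterate_eq_pow] at h
    exact Fin.ext (iterate_injOn_Iio_minimalPeriod i.2 j.2 h)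
  rw [cycLen, ← Fintype.card_fin (minimalPeriod π x), ← Nat.card_eq_fintype_card]
  refine (Nat.card_eq_of_bijective (fun j : Fin (minimalPeriod π x) =>
    (⟨(π ^ (j : ℕ)) x, j, by rw [zpow_natCast]⟩ : {y // π.SameCycle x y}))
    ⟨fun i j h => hinj (congrArg Subtype.val h), fun ⟨y, hy⟩ => ?_⟩).symm
  obtain ⟨j, hj, rfl⟩ := (π.sameCycle_iff_exists_lt_minimalPeriod x y).mp hy
  exact ⟨⟨j, hj⟩, rfl⟩

theorem length_seg (x : Fin n) : (seg π x).length = cycLen π x := by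
  simp [seg]

theorem mem_seg {x y : Fin n} : y ∈ seg π x ↔ π.SameCycle x y := by
  simp [seg, cycLen_eq_minimalPeriod, π.sameCycle_iff_exists_lt_minimalPeriod]

theorem nodup_seg (x : Fin n) : (seg π x).Nodup := by
  refine List.nodup_range.map_on fun i hi j hj h => ?_
  rw [List.mem_range, cycLen_eq_minimalPeriod] at hi hj
  simp only [← Perm.iterate_eq_pow] at h
  exact iterate_injOn_Iio_minimalPeriod hi hj h

theorem getElem?_seg_mod (x : Fin n) (j : ℕ) :
    (seg π x)[j % cycLen π x]? = some ((π ^ j) x) := by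
  have hj := Nat.mod_lt j ((cycLen_eq_minimalPeriod π x).symm ▸ π.minimalPeriod_pos x)
  rw [seg, List.getElem?_map, List.getElem?_range hj, Option.map_some, cycLen_eq_minimalPeriod,
    ← Perm.iterate_eq_pow, ← Perm.iterate_eq_pow, iterate_mod_minimalPeriod_eq]

theorem seg_eq_cons (x : Fin n) : ∃ t, seg π x = x :: t := by
  obtain ⟨k, hk⟩ := Nat.exists_eq_add_one.mpr (cycLen_eq_minimalPeriod π x ▸
    π.minimalPeriod_pos x)
  exact ⟨_, by rw [seg, hk, List.range_succ_eq_map, List.map_cons, pow_zero, Perm.one_apply]⟩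

theorem seg_of_fixed {x : Fin n} (h : π x = x) : seg π x = [x] := by
  have : cycLen π x = 1 := by
    rw [cycLen_eq_minimalPeriod, minimalPeriod_eq_one_iff_isFixedPt]; exact h
  simp [seg, this]

theorem pair_sublist_seg {x : Fin n} (h : π x ≠ x) : [x, π x] <+ seg π x := by
  have : 2 ≤ cycLen π x := by
    have := π.minimalPeriod_pos x
    have : minimalPeriod π x ≠ 1 := fun h1 => h (minimalPeriod_eq_one_iff_isFixedPt.mp h1)
    rw [cycLen_eq_minimalPeriod]; omega
  simpa [seg, List.range_succ] using (List.range_sublist.mpr this).map fun j => (π ^ j) x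

theorem pow_apply_eq_of_seg_eq {σ τ : Perm (Fin n)} {x : Fin n} (h : seg σ x = seg τ x)
    (j : ℕ) : (σ ^ j) x = (τ ^ j) x := by
  have hlen : cycLen σ x = cycLen τ x := by rw [← length_seg, ← length_seg, h]
  have hσ := getElem?_seg_mod σ x j
  rw [h, hlen, getElem?_seg_mod] at hσ
  exact (Option.some.inj hσ).symm

theorem apply_eq_of_seg_eq {σ τ : Perm (Fin n)} {x y : Fin n} (h : seg σ x = seg τ x)
    (hy : σ.SameCycle x y) : σ y = τ y := by
  obtain ⟨j, rfl⟩ := hy.exists_nat_pow_eq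
  have := pow_apply_eq_of_seg_eq h (j + 1)
  rwa [pow_succ', Perm.mul_apply, pow_succ', Perm.mul_apply, ← pow_apply_eq_of_seg_eq h j] at this

end CycleForm

section Psi

variable {n : ℕ} (π : Perm (Fin n))

theorem isCycMin_zero [NeZero n] : isCycMin π 0 :=
  fun y _ => Fin.zero_le y

theorem exists_isCycMin_sameCycle (y : Fin n) : ∃ m, isCycMin π m ∧ π.SameCycle m y := by
  have hne : (Finset.univ.filter (π.SameCycle y)).Nonempty := ⟨y, by simp [Perm.SameCycle.refl]⟩
  obtain ⟨-, hy⟩ := Finset.mem_filter.mp (Finset.min'_mem _ hne)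
  refine ⟨_, fun z hz => Finset.min'_le _ z ?_, hy.symm⟩
  simpa using hy.trans hz

theorem mem_cycMins {m : Fin n} : m ∈ cycMins π ↔ isCycMin π m := by
  simp [cycMins]

theorem pairwise_cycMins : (cycMins π).Pairwise (· > ·) := by
  rw [cycMins, List.pairwise_reverse]
  exact (List.pairwise_lt_finRange n).filter _

theorem psiList_eq_flatten : psiList π = ((cycMins π).map (seg π)).flatten := by
  rw [psiList]
  induction cycMins π with
  | nil => rfl
  | cons a l ih => simp [ih]

theorem mem_psiList (y : Fin n) : y ∈ psiList π := by
  obtain ⟨m, hm, hmy⟩ := exists_isCycMin_sameCycle π y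
  rw [psiList_eq_flatten, List.mem_flatten]
  exact ⟨seg π m, List.mem_map_of_mem ((mem_cycMins π).mpr hm), (mem_seg π).mpr hmy⟩

theorem nodup_psiList : (psiList π).Nodup := by
  rw [psiList_eq_flatten, List.nodup_flatten, List.pairwise_map]
  refine ⟨by simpa using fun m _ => nodup_seg π m, (pairwise_cycMins π).imp_of_mem ?_⟩
  intro a b ha hb hab y hya hyb
  have hsame : π.SameCycle a b := ((mem_seg π).mp hya).trans ((mem_seg π).mp hyb).symm
  exact hab.ne' (le_antisymm ((mem_cycMins π).mp ha b hsame) ((mem_cycMins π).mp hb a hsame.symm))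

theorem length_psiList : (psiList π).length = n := by
  simpa using (List.toFinset_card_of_nodup (nodup_psiList π)).symm.trans
    (congrArg Finset.card (Finset.eq_univ_of_forall fun y => List.mem_toFinset.mpr
      (mem_psiList π y)))

theorem wordN_eq_getD : wordN π = fun i => ((psiList π).map Fin.val).getD i 0 := by
  funext i
  simp only [wordN, bind_pure_comp, List.map_eq_map, List.map_map]
  rfl

theorem occ3_wordN_eq_zero_iff :
    occ3 n (wordN π) (fun a b c => a < b ∧ c < b) = 0 ↔ ¬(psiList π).HasPeak := by
  rw [wordN_eq_getD]
  have h := occ3_getD_eq_zero_iff (psiList π) Fin.val (fun a b c => a < b ∧ c < b)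
  rw [length_psiList] at h
  rw [h]
  simp [List.HasPeak]

theorem exists_psiList_eq_append [NeZero n] : ∃ C : List (Fin n), C.Pairwise (· > ·) ∧
    (∀ m, m ∈ C ↔ isCycMin π m ∧ m ≠ 0) ∧ psiList π = (C.map (seg π)).flatten ++ seg π 0 := by
  obtain ⟨C, B, hCB⟩ := List.append_of_mem ((mem_cycMins π).mpr (isCycMin_zero π))
  have hp := pairwise_cycMins π
  rw [hCB, List.pairwise_append, List.pairwise_cons] at hp
  obtain rfl : B = [] :=
    List.eq_nil_iff_forall_not_mem.mpr fun b hb => (hp.2.1.1 b hb).not_ge (Fin.zero_le b)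
  refine ⟨C, hp.1, fun m => ?_, by simp [psiList_eq_flatten, hCB]⟩
  rw [← mem_cycMins, hCB]
  have hC : m ∈ C → m ≠ 0 := fun hm => (hp.2.2 m hm 0 (List.mem_cons_self ..)).ne'
  simp only [List.mem_append, List.mem_singleton]
  tauto

theorem apply_eq_self_of_isCycMin_of_not_hasPeak [NeZero n] (h : ¬(psiList π).HasPeak) {m : Fin n}
    (hm : isCycMin π m) (hm0 : m ≠ 0) : π m = m := by
  obtain ⟨C, -, hC, hψ⟩ := exists_psiList_eq_append π
  by_contra hfix
  have hlt : m < π m := lt_of_le_of_ne (hm _ (Perm.sameCycle_apply_right.mpr (.refl _ _)))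
    (Ne.symm hfix)
  have hsub : [m, π m] ++ [0] <+ psiList π := by
    rw [hψ]
    refine .append ((pair_sublist_seg π hfix).trans (List.sublist_flatten_of_mem
      (List.mem_map_of_mem ((hC m).mpr ⟨hm, hm0⟩)))) ?_
    exact List.singleton_sublist.mpr ((mem_seg π).mpr (.refl _ _))
  exact h ⟨m, π m, 0, hsub, hlt, ((Fin.pos_iff_ne_zero' m).mpr hm0).trans hlt⟩

theorem pairwise_seg_zero_of_not_hasPeak [NeZero n] (h : ¬(psiList π).HasPeak) :
    (seg π 0).Pairwise (· ≤ ·) := by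
  obtain ⟨C, -, -, hψ⟩ := exists_psiList_eq_append π
  obtain ⟨t, ht⟩ := seg_eq_cons π 0
  have hnd := nodup_seg π 0
  rw [ht, List.nodup_cons] at hnd
  have hsub : seg π 0 <+ psiList π := hψ ▸ List.sublist_append_right _ _
  rw [ht] at hsub ⊢
  exact List.pairwise_le_of_not_hasPeak_cons
    (fun y hy => (Fin.pos_iff_ne_zero' y).mpr (ne_of_mem_of_not_mem hy hnd.1))
    fun hp => h (hp.mono hsub)

theorem not_hasPeak_psiList [NeZero n] (hfix : ∀ m, isCycMin π m → m ≠ 0 → π m = m)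
    (hsort : (seg π 0).Pairwise (· ≤ ·)) : ¬(psiList π).HasPeak := by
  obtain ⟨C, hCp, hC, hψ⟩ := exists_psiList_eq_append π
  have hsingle : C.map (seg π) = C.map fun m => [m] :=
    List.map_congr_left fun m hm => seg_of_fixed π (hfix m ((hC m).mp hm).1 ((hC m).mp hm).2)
  rw [hψ, hsingle, ← List.flatMap_def, List.flatMap_singleton']
  exact List.not_hasPeak_append (hCp.imp le_of_lt) hsort

end Psi

section SortedCycle

open Finset

variable {n : ℕ}

def sortedCycle (s : Finset (Fin n)) : Perm (Fin n) :=
  (s.sort (· ≤ ·)).formPerm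

theorem sortedCycle_apply_of_notMem {s : Finset (Fin n)} {x : Fin n} (hx : x ∉ s) :
    sortedCycle s x = x :=
  List.formPerm_apply_of_notMem (by simpa using hx)

variable [NeZero n] {s : Finset (Fin n)}

theorem getElem?_sort_mod (h0 : 0 ∈ s) (j : ℕ) :
    (s.sort (· ≤ ·))[j % #s]? = some ((sortedCycle s ^ j) 0) := by
  have hpos : 0 < (s.sort (· ≤ ·)).length := by
    rw [length_sort]; exact card_pos.mpr ⟨0, h0⟩
  have hhead : (s.sort (· ≤ ·))[0] = 0 := by
    rw [sorted_zero_eq_min']; exact le_antisymm (min'_le s 0 h0) (Fin.zero_le _)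
  have h := List.formPerm_pow_apply_getElem _ (sort_nodup s _) j 0 hpos
  rw [hhead, zero_add] at h
  rw [sortedCycle, h, ← length_sort (· ≤ ·), List.getElem?_eq_getElem]

theorem sameCycle_zero_sortedCycle_iff (h0 : 0 ∈ s) {y : Fin n} :
    (sortedCycle s).SameCycle 0 y ↔ y ∈ s := by
  constructor
  · rintro hy
    obtain ⟨j, rfl⟩ := hy.exists_nat_pow_eq
    exact (mem_sort (· ≤ ·)).mp (List.mem_of_getElem? (getElem?_sort_mod h0 j))
  · intro hy
    obtain ⟨i, hi, hiy⟩ := List.getElem_of_mem ((mem_sort (· ≤ ·)).mpr hy)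
    have h := getElem?_sort_mod h0 i
    rw [Nat.mod_eq_of_lt (by rwa [length_sort] at hi), List.getElem?_eq_getElem hi, hiy,
      Option.some_inj] at h
    exact ⟨i, by rw [zpow_natCast, ← h]⟩

theorem seg_sortedCycle_zero (h0 : 0 ∈ s) : seg (sortedCycle s) 0 = s.sort (· ≤ ·) := by
  have hlen : cycLen (sortedCycle s) 0 = #s := by
    rw [cycLen, Nat.card_congr (Equiv.subtypeEquivRight fun y =>
      sameCycle_zero_sortedCycle_iff h0), Nat.card_eq_fintype_card, Fintype.card_coe]
  refine List.ext_getElem? fun i => ?_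
  by_cases hi : i < #s
  · have hseg := getElem?_seg_mod (sortedCycle s) 0 i
    rw [hlen, Nat.mod_eq_of_lt hi] at hseg
    rw [hseg, ← getElem?_sort_mod h0, Nat.mod_eq_of_lt hi]
  · rw [List.getElem?_eq_none (by rw [length_seg, hlen]; omega),
      List.getElem?_eq_none (by rw [length_sort]; omega)]

theorem isCycMin_sortedCycle_iff (h0 : 0 ∈ s) {x : Fin n} :
    isCycMin (sortedCycle s) x ↔ x ∉ s ∨ x = 0 := by
  constructor
  · intro hx
    by_cases hxs : x ∈ s
    · exact .inr (nonpos_iff_eq_zero.mp (hx 0 ((sameCycle_zero_sortedCycle_iff h0).mpr hxs).symm))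
    · exact .inl hxs
  · rintro (hxs | rfl)
    · exact fun y hy => (hy.eq_of_left (sortedCycle_apply_of_notMem hxs)).le
    · exact isCycMin_zero _

theorem cyc_sortedCycle (h0 : 0 ∈ s) : cyc (sortedCycle s) = #sᶜ + 1 := by
  rw [cyc, Nat.card_congr (Equiv.subtypeEquivRight fun x => isCycMin_sortedCycle_iff h0),
    Nat.card_eq_fintype_card, Fintype.card_subtype]
  have : univ.filter (fun x : Fin n => x ∉ s ∨ x = 0) = insert 0 sᶜ := by
    ext x; simp [or_comm]
  rw [this, card_insert_of_notMem (by simpa using h0)]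

theorem not_hasPeak_psiList_sortedCycle (h0 : 0 ∈ s) : ¬(psiList (sortedCycle s)).HasPeak :=
  not_hasPeak_psiList _ (fun _ hm hm0 => sortedCycle_apply_of_notMem
      (((isCycMin_sortedCycle_iff h0).mp hm).resolve_right hm0))
    (seg_sortedCycle_zero h0 ▸ pairwise_sort s _)

theorem toFinset_seg_sortedCycle (h0 : 0 ∈ s) : (seg (sortedCycle s) 0).toFinset = s := by
  rw [seg_sortedCycle_zero h0, sort_toFinset]

theorem sortedCycle_toFinset_seg_zero (π : Perm (Fin n)) (h : ¬(psiList π).HasPeak) :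
    sortedCycle (seg π 0).toFinset = π := by
  set s := (seg π 0).toFinset
  have hseg : seg π 0 = seg (sortedCycle s) 0 := by
    rw [seg_sortedCycle_zero (List.mem_toFinset.mpr ((mem_seg π).mpr (.refl _ _)))]
    exact ((List.toFinset_sort _ (nodup_seg π 0)).mpr (pairwise_seg_zero_of_not_hasPeak π h)).symm
  ext x
  by_cases hx : x ∈ s
  · exact congrArg Fin.val (apply_eq_of_seg_eq hseg ((mem_seg π).mp (List.mem_toFinset.mp hx))).symm
  · obtain ⟨m, hm, hmx⟩ := exists_isCycMin_sameCycle π x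
    have hm0 : m ≠ 0 := by
      rintro rfl; exact hx (List.mem_toFinset.mpr ((mem_seg π).mpr hmx))
    have hfix := apply_eq_self_of_isCycMin_of_not_hasPeak π h hm hm0
    obtain rfl := hmx.eq_of_left hfix
    rw [sortedCycle_apply_of_notMem hx, hfix]

end SortedCycle

open Finset in
theorem mem_powersetCard_univ_erase_iff {α : Type*} [Fintype α] [DecidableEq α] {r : ℕ} {a : α}
    {t : Finset α} :
    t ∈ powersetCard r (univ.erase a) ↔ a ∉ t ∧ #t = r := by
  simp [mem_powersetCard, subset_erase]

open Finset in
def peakFreeEquiv {n k : ℕ} [NeZero n] (hk : 1 ≤ k) :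
    {π : Perm (Fin n) // cyc π = k ∧ ¬(psiList π).HasPeak} ≃
      {t : Finset (Fin n) // t ∈ powersetCard (k - 1) (univ.erase 0)} where
  toFun π := ⟨(seg π.1 0).toFinsetᶜ, by
    have h0 : 0 ∈ (seg π.1 0).toFinset := List.mem_toFinset.mpr ((mem_seg _).mpr (.refl _ _))
    have hcyc := π.2.1
    rw [← sortedCycle_toFinset_seg_zero π.1 π.2.2, cyc_sortedCycle h0] at hcyc
    exact mem_powersetCard_univ_erase_iff.mpr ⟨by simpa using h0, by omega⟩⟩
  invFun t := ⟨sortedCycle t.1ᶜ, by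
    obtain ⟨h0, hcard⟩ := mem_powersetCard_univ_erase_iff.mp t.2
    have h0 : 0 ∈ t.1ᶜ := mem_compl.mpr h0
    exact ⟨by rw [cyc_sortedCycle h0, compl_compl, hcard]; omega,
      not_hasPeak_psiList_sortedCycle h0⟩⟩
  left_inv π := Subtype.ext (by simpa using sortedCycle_toFinset_seg_zero π.1 π.2.2)
  right_inv t := Subtype.ext (by
    simp [toFinset_seg_sortedCycle (mem_compl.mpr (mem_powersetCard_univ_erase_iff.mp t.2).1)])

theorem avoid121'_count_general (n k : ℕ) (hn : 1 ≤ n) (hk : 1 ≤ k) :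
    Nat.card {π : Equiv.Perm (Fin n) //
        cyc π = k ∧ occ3 n (wordN π) (fun a b c => a < b ∧ c < b) = 0}
      = (n - 1).choose (k - 1) := by
  have : NeZero n := ⟨by omega⟩
  calc _ = Nat.card {π : Perm (Fin n) // cyc π = k ∧ ¬(psiList π).HasPeak} :=
        Nat.card_congr (Equiv.subtypeEquivRight fun π => by rw [occ3_wordN_eq_zero_iff])
    _ = (Finset.powersetCard (k - 1) (Finset.univ.erase (0 : Fin n))).card :=
        (Nat.card_congr (peakFreeEquiv hk)).trans
          (Nat.card_eq_fintype_card.trans (Fintype.card_coe _))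
    _ = (n - 1).choose (k - 1) := by simp

/-- For `n ≥ 1` and `1 ≤ k ≤ n`, the number of permutations of `[n]` with `k` cycles
avoiding the partially ordered pattern 1-2-1' (positions `i < j < k` of `Ψ(π)` with
`w i < w j` and `w k < w j`) is the binomial coefficient `C(n-1, k-1)`. -/
theorem avoid121'_count (n k : ℕ) (hn : 1 ≤ n) (hk : 1 ≤ k) (hkn : k ≤ n) :
    Nat.card {π : Equiv.Perm (Fin n) //
        cyc π = k ∧ occ3 n (wordN π) (fun a b c => a < b ∧ c < b) = 0}
      = (n - 1).choose (k - 1) :=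
  avoid121'_count_general n k hn hk
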